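/- arXiv:2308.05293 — 2 statements merged into one kernel-verified Lean document; each statement's English description precedes it below -/
import Mathlib

section
/- Let K_n be the complete graph on vertices P_1, …, P_n with n ≥ 4, and let D = P_1 + ⋯ + P_n. Then the rank of D equals 2; that is, for every effective divisor E of degree 2, |D − E| ≠ ∅, and there exists an effective divisor E′ of degree 3 with |D − E′| = ∅. -/
open scoped Classical

namespace GraphDiv

variable {V : Type*}

/-- The Laplacian divisor of an integer-valued function on the vertices. -/
noncomputable def lap (G : SimpleGraph V) [Fintype V] (f : V → ℤ) : V → ℤ :=
  fun P => ∑ Q : V, if G.Adj P Q then f P - f Q else 0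

/-- Linear equivalence of divisors: `D ∼ D'` iff `D - D' = Δ(f)` for some `f`. -/
def LinEquiv (G : SimpleGraph V) [Fintype V] (D D' : V → ℤ) : Prop :=
  ∃ f : V → ℤ, D - D' = lap G f

/-- A divisor is effective if all its coefficients are nonnegative. -/
def Effective (D : V → ℤ) : Prop := ∀ P, 0 ≤ D P

/-- The degree of a divisor. -/
def degDiv [Fintype V] (D : V → ℤ) : ℤ := ∑ P : V, D P

/-- The complete linear system of a divisor. -/
def linSys (G : SimpleGraph V) [Fintype V] (D : V → ℤ) : Set (V → ℤ) :=
  {E | Effective E ∧ LinEquiv G E D}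

/-- `RankEq G D r` says the Baker–Norine rank of `D` equals `r`. -/
def RankEq (G : SimpleGraph V) [Fintype V] (D : V → ℤ) (r : ℤ) : Prop :=
  -1 ≤ r ∧
  (∀ E : V → ℤ, Effective E → degDiv E ≤ r → (linSys G (D - E)).Nonempty) ∧
  ∃ E : V → ℤ, Effective E ∧ degDiv E = r + 1 ∧ linSys G (D - E) = ∅

/-- The divisor consisting of a single vertex. -/
noncomputable def unit (P : V) : V → ℤ := fun Q => if Q = P then 1 else 0

/-- A graph is 2-edge-connected if it is connected and stays connected
after removing any single edge. -/
def TwoEdgeConnected (G : SimpleGraph V) : Prop :=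
  G.Connected ∧ ∀ v w : V, G.Adj v w → (G.deleteEdges {s(v, w)}).Connected

/-- Action of a graph automorphism on divisors. -/
def divAct {G : SimpleGraph V} (σ : G ≃g G) (D : V → ℤ) : V → ℤ :=
  fun v => D (σ.symm v)

/-- Two vertices lie in the same orbit of a subgroup of automorphisms. -/
def vrel {G : SimpleGraph V} (H : Subgroup (G ≃g G)) (v w : V) : Prop :=
  ∃ σ ∈ H, σ v = w

/-- An edge is collapsed in the quotient: its endpoints lie in the same vertex orbit. -/
def Collapsed {G : SimpleGraph V} (H : Subgroup (G ≃g G)) (e : Sym2 V) : Prop :=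
  ∃ a b : V, e = s(a, b) ∧ vrel H a b

/-- The quotient morphism `G → G/H` is harmonic: for every vertex `P`, the number of
edges at `P` lying above a given non-collapsed edge-orbit incident to the class of `P`
is independent of the choice of that edge-orbit. -/
def QuotHarmonic (G : SimpleGraph V) (H : Subgroup (G ≃g G)) : Prop :=
  ∀ (P : V) (e₁ e₂ : Sym2 V), e₁ ∈ G.edgeSet → e₂ ∈ G.edgeSet →
    (∃ σ ∈ H, P ∈ Sym2.map (⇑σ) e₁) → (∃ σ ∈ H, P ∈ Sym2.map (⇑σ) e₂) →
    ¬ Collapsed H e₁ → ¬ Collapsed H e₂ →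
    Nat.card {e : Sym2 V // e ∈ G.edgeSet ∧ P ∈ e ∧ ∃ σ ∈ H, Sym2.map (⇑σ) e = e₁} =
    Nat.card {e : Sym2 V // e ∈ G.edgeSet ∧ P ∈ e ∧ ∃ σ ∈ H, Sym2.map (⇑σ) e = e₂}

/-- `H` acts harmonically on `G`: for every subgroup `Δ ≤ H` the quotient morphism
`G → G/Δ` is harmonic. -/
def HarmonicAction (G : SimpleGraph V) (H : Subgroup (G ≃g G)) : Prop :=
  ∀ Δ : Subgroup (G ≃g G), Δ ≤ H → QuotHarmonic G Δ

/-- `P` is a Galois point with respect to `|D|`. -/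
def IsGaloisPoint (G : SimpleGraph V) [Fintype V] (D : V → ℤ) (P : V) : Prop :=
  RankEq G (D - unit P) 1 ∧
  (∀ Q : V, RankEq G (D - unit P - unit Q) 0) ∧
  ∃ H : Subgroup (G ≃g G), (Nat.card H : ℤ) = degDiv D - 1 ∧
    (∃ v w : V, ¬ vrel H v w) ∧
    HarmonicAction G H ∧
    ∃ E₁ E₂ : V → ℤ, E₁ ≠ E₂ ∧ E₁ ∈ linSys G (D - unit P) ∧ E₂ ∈ linSys G (D - unit P) ∧
      ∀ σ ∈ H, divAct σ E₁ = E₁ ∧ divAct σ E₂ = E₂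

/-- A divisor is `q`-reduced. -/
def QReduced (G : SimpleGraph V) [Fintype V] (q : V) (D : V → ℤ) : Prop :=
  (∀ P : V, P ≠ q → 0 ≤ D P) ∧
  ∀ S : Finset V, S.Nonempty → q ∉ S →
    ∃ P ∈ S, D P < (((G.neighborFinset P).filter (fun Q => Q ∉ S)).card : ℤ)

/-- The wheel graph on `m + 1` vertices: hub `none` and rim `some i` for `i : Fin m`,
with the rim a cycle via `i ↦ i + 1 (mod m)`. -/
def wheel (m : ℕ) : SimpleGraph (Option (Fin m)) where
  Adj v w :=
    match v, w with
    | none, none => False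
    | none, some _ => True
    | some _, none => True
    | some i, some j => i ≠ j ∧ ((i.val + 1) % m = j.val ∨ (j.val + 1) % m = i.val)
  symm := by
    constructor
    intro v w h
    cases v <;> cases w <;> simp_all <;> tauto
  loopless := by constructor; intro v; cases v <;> simp

/-- The 4-cycle `P₁P₂P₃P₄` with the chord `P₁P₃` (vertices `0,1,2,3`). -/
def g4 : SimpleGraph (Fin 4) :=
  SimpleGraph.fromRel (fun v w =>
    (v = 0 ∧ w = 1) ∨ (v = 1 ∧ w = 2) ∨ (v = 2 ∧ w = 3) ∨ (v = 3 ∧ w = 0) ∨ (v = 0 ∧ w = 2))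

end GraphDiv

/-! For the lower bound, an effective `E` of degree at most 2 either satisfies `E ≤ 1`, so that
`D - E` is already effective, or is concentrated at one vertex `P`, and firing `P` once makes
`D - E` effective because `n ≥ 2`. For the upper bound take `E = 2P + Q`. If `D - E + Δf` were
effective, normalize `f ≥ 0` with `f(R) = 0` somewhere: the coefficient at `R` forces
`∑ f ≤ 1`, while the coefficients at `P` and `Q` force `f(P), f(Q) ≥ 1`. -/

namespace GraphDiv

variable {V : Type*}

lemma effective_unit (P : V) : Effective (unit P) := by
  intro Q
  unfold unit
  split_ifs <;> norm_num

variable [Fintype V]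

lemma lap_sub_const (G : SimpleGraph V) (f : V → ℤ) (c : ℤ) :
    lap G (fun P => f P - c) = lap G f := by
  funext P
  simp only [lap, sub_sub_sub_cancel_right]

lemma exists_nonneg_lap_eq [Nonempty V] (G : SimpleGraph V) (f : V → ℤ) :
    ∃ g : V → ℤ, (∀ P, 0 ≤ g P) ∧ (∃ P, g P = 0) ∧ lap G g = lap G f := by
  obtain ⟨P, -, hP⟩ := Finset.exists_min_image Finset.univ f Finset.univ_nonempty
  exact ⟨fun Q => f Q - f P, fun Q => sub_nonneg.2 (hP Q (Finset.mem_univ Q)), ⟨P, sub_self _⟩,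
    lap_sub_const G f (f P)⟩

lemma lap_top_apply (f : V → ℤ) (P : V) :
    lap (⊤ : SimpleGraph V) f P = Fintype.card V * f P - ∑ Q, f Q := by
  have h : lap (⊤ : SimpleGraph V) f P = ∑ Q, (f P - f Q) := by
    refine Finset.sum_congr rfl fun Q _ => ?_
    by_cases hPQ : P = Q <;> simp [hPQ]
  rw [h, Finset.sum_sub_distrib, Finset.sum_const, Finset.card_univ, nsmul_eq_mul]

lemma mem_linSys_iff (G : SimpleGraph V) (D E : V → ℤ) :
    E ∈ linSys G D ↔ Effective E ∧ ∃ f, E = D + lap G f := by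
  simp only [linSys, LinEquiv, Set.mem_ofPred_eq, sub_eq_iff_eq_add']

lemma add_lap_mem_linSys (G : SimpleGraph V) (D f : V → ℤ) (h : Effective (D + lap G f)) :
    D + lap G f ∈ linSys G D :=
  (mem_linSys_iff G D _).2 ⟨h, f, rfl⟩

lemma mem_linSys_self (G : SimpleGraph V) {D : V → ℤ} (hD : Effective D) : D ∈ linSys G D :=
  ⟨hD, 0, by funext P; simp [lap]⟩

lemma apply_le_degDiv {E : V → ℤ} (hE : Effective E) (P : V) : E P ≤ degDiv E :=
  Finset.single_le_sum (fun Q _ => hE Q) (Finset.mem_univ P)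

lemma add_apply_le_degDiv {E : V → ℤ} (hE : Effective E) {P Q : V} (hPQ : P ≠ Q) :
    E P + E Q ≤ degDiv E := by
  rw [← Finset.sum_pair hPQ]
  exact Finset.sum_le_sum_of_subset_of_nonneg (Finset.subset_univ _) fun R _ _ => hE R

lemma degDiv_add (D E : V → ℤ) : degDiv (D + E) = degDiv D + degDiv E :=
  Finset.sum_add_distrib

lemma degDiv_smul (c : ℤ) (D : V → ℤ) : degDiv (c • D) = c * degDiv D :=
  (Finset.mul_sum _ _ _).symm

lemma degDiv_unit (P : V) : degDiv (unit P) = 1 := by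
  simp [degDiv, unit]

lemma lap_top_unit_apply (P Q : V) :
    lap (⊤ : SimpleGraph V) (unit P) Q = Fintype.card V * unit P Q - 1 := by
  rw [lap_top_apply, ← degDiv, degDiv_unit]

lemma linSys_top_one_sub_nonempty (hV : 2 ≤ Fintype.card V) {E : V → ℤ} (hE : Effective E)
    (hdeg : degDiv E ≤ 2) : (linSys (⊤ : SimpleGraph V) (1 - E)).Nonempty := by
  by_cases hsmall : ∀ P, E P ≤ 1
  · exact ⟨1 - E, mem_linSys_self _ fun P => sub_nonneg.2 (hsmall P)⟩
  push Not at hsmall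
  obtain ⟨P, hP⟩ := hsmall
  have hEP : E P ≤ 2 := (apply_le_degDiv hE P).trans hdeg
  have hrest : ∀ Q, Q ≠ P → E Q = 0 := fun Q hQP =>
    le_antisymm (by linarith [add_apply_le_degDiv hE hQP, hE P]) (hE Q)
  -- firing `P` moves one chip from each other vertex onto `P`
  refine ⟨_, add_lap_mem_linSys _ _ (unit P) fun Q => ?_⟩
  simp only [Pi.add_apply, Pi.sub_apply, Pi.one_apply, lap_top_unit_apply, unit]
  by_cases hQP : Q = P
  · subst hQP
    simp only [if_true, mul_one]
    omega
  · simp only [hQP, if_false, mul_zero, hrest Q hQP]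
    norm_num

lemma linSys_top_eq_empty {D : V → ℤ} {P Q : V} (hPQ : P ≠ Q) (hD : ∀ R, D R ≤ 1)
    (hP : D P ≤ -1) (hQ : D Q ≤ 0) : linSys (⊤ : SimpleGraph V) D = ∅ := by
  rw [Set.eq_empty_iff_forall_notMem]
  rintro E hE
  obtain ⟨hE, f, rfl⟩ := (mem_linSys_iff _ _ _).1 hE
  have : Nonempty V := ⟨P⟩
  obtain ⟨g, hg, ⟨R, hR⟩, hgf⟩ := exists_nonneg_lap_eq ⊤ f
  have hE' : ∀ S, 0 ≤ D S + (Fintype.card V * g S - ∑ T, g T) := fun S => by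
    simpa [← hgf, lap_top_apply] using hE S
  have hsum : ∑ T, g T ≤ 1 := by
    have := hE' R
    rw [hR, mul_zero] at this
    linarith [hD R]
  have hPQ_sum : g P + g Q ≤ ∑ T, g T := add_apply_le_degDiv hg hPQ
  have hgP : 0 < g P := by
    refine (hg P).lt_of_ne fun h0 => ?_
    have := hE' P
    rw [← h0, mul_zero] at this
    linarith [hg Q]
  have hgQ : 0 < g Q := by
    refine (hg Q).lt_of_ne fun h0 => ?_
    have := hE' Q
    rw [← h0, mul_zero] at this
    linarith
  linarith

end GraphDiv

open GraphDiv in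
/-- On `K_n` (`n ≥ 4`), the divisor `D = P₁ + ⋯ + Pₙ` has rank `2`. -/
theorem stmt4 (n : ℕ) (hn : 4 ≤ n) :
    RankEq (⊤ : SimpleGraph (Fin n)) (fun _ => 1) 2 := by
  have hcard : 2 ≤ Fintype.card (Fin n) := by rw [Fintype.card_fin]; omega
  let P : Fin n := ⟨0, by omega⟩
  let Q : Fin n := ⟨1, by omega⟩
  have hPQ : P ≠ Q := by simp [P, Q, Fin.ext_iff]
  have hwitness : Effective ((2 : ℤ) • unit P + unit Q) := fun R =>
    add_nonneg (mul_nonneg zero_le_two (effective_unit P R)) (effective_unit Q R)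
  refine ⟨by norm_num, fun E hE hdeg => linSys_top_one_sub_nonempty hcard hE hdeg,
    _, hwitness, ?_, linSys_top_eq_empty hPQ (fun R => sub_le_self _ (hwitness R)) ?_ ?_⟩
  · rw [degDiv_add, degDiv_smul, degDiv_unit, degDiv_unit]
    norm_num
  · simp [unit, hPQ]
  · simp [unit, hPQ.symm]
end

section
/- Let G be the graph with vertices P_1, P_2, P_3, P_4 and edges {P_1P_2, P_2P_3, P_3P_4, P_4P_1, P_1P_3}, and let D = P_1 + P_2 + P_3 + P_4. Then r(D) = 2 but no vertex of G is a Galois point with respect to |D|. -/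
open scoped Classical

/-!
For `E` effective of degree at most `2`, `D - E` is itself effective unless `E = 2P`, and then
`D - 2P` becomes effective once `P` borrows a chip from each neighbour; so `r(D) ≥ 2`. A
character of `Div(G)` into `ℤ/8` vanishing on principal divisors shows that `D - 2P₂ - P₃` is
not equivalent to an effective divisor, so `r(D) = 2`. Every automorphism of `G` must preserve
the unique non-adjacent pair `{P₂, P₄}`, so `Aut(G)` has exponent `2` and contains no subgroup of
order `deg D - 1 = 3`.
-/

theorem not_dvd_natCard_of_forall_mul_self_eq_one {G : Type*} [Group G] [Finite G]
    (h : ∀ g : G, g * g = 1) {p : ℕ} [hp : Fact p.Prime] (hp2 : p ≠ 2) : ¬ p ∣ Nat.card G := by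
  intro hdvd
  obtain ⟨x, hx⟩ := exists_prime_orderOf_dvd_card' p hdvd
  have : p ∣ 2 := hx ▸ orderOf_dvd_of_pow_eq_one (by rw [pow_two, h])
  exact hp2 ((Nat.prime_dvd_prime_iff_eq hp.out Nat.prime_two).1 this)

namespace GraphDiv

section

open Finset

variable {V : Type*} [Fintype V] (G : SimpleGraph V)

theorem linSys_nonempty_of_effective {D : V → ℤ} (hD : Effective D) :
    (linSys G D).Nonempty :=
  ⟨D, hD, 0, by ext; simp [lap]⟩

theorem linSys_nonempty_of_le {D E E' : V → ℤ} (hle : E ≤ E')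
    (h : (linSys G (D - E')).Nonempty) : (linSys G (D - E)).Nonempty := by
  obtain ⟨F, hF, f, hf⟩ := h
  refine ⟨F + (E' - E), fun v => ?_, f, ?_⟩
  · simpa using add_nonneg (hF v) (sub_nonneg.2 (hle v))
  · rw [← hf]; abel

theorem lap_unit_self (P : V) : lap G (unit P) P = #{Q | G.Adj P Q} := by
  simp only [lap, unit, card_filter]
  push_cast
  refine sum_congr rfl fun Q _ => ?_
  by_cases hPQ : G.Adj P Q
  · simp [hPQ, hPQ.ne']
  · simp [hPQ]

theorem lap_unit_of_ne {P v : V} (hv : v ≠ P) : lap G (unit P) v = if G.Adj v P then -1 else 0 := by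
  simp only [lap, unit, if_neg hv, zero_sub]
  rw [sum_eq_single P]
  · simp
  · intro Q _ hQ; simp [hQ]
  · simp

/-- `P` borrows one chip from each neighbour: `P` ends with `deg P - 1 ≥ 0` chips and each
neighbour with none. -/
theorem linSys_one_sub_two_unit_nonempty {P : V} (hP : ∃ Q, G.Adj P Q) :
    (linSys G ((fun _ => 1) - 2 • unit P)).Nonempty := by
  refine ⟨(fun _ => 1) - 2 • unit P + lap G (unit P), fun v => ?_, unit P, by abel⟩
  obtain ⟨Q, hQ⟩ := hP
  by_cases hv : v = P
  · subst hv
    simp only [Pi.add_apply, Pi.sub_apply, Pi.smul_apply, lap_unit_self]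
    simpa [unit] using ⟨Q, by simpa using hQ⟩
  · simp only [Pi.add_apply, Pi.sub_apply, Pi.smul_apply, lap_unit_of_ne G hv]
    split_ifs <;> simp [unit, hv]

theorem linSys_one_sub_nonempty (hG : ∀ P, ∃ Q, G.Adj P Q) {E : V → ℤ} (hE : Effective E)
    (hdeg : degDiv E ≤ 2) : (linSys G ((fun _ => 1) - E)).Nonempty := by
  by_cases hsmall : ∀ v, E v ≤ 1
  · exact linSys_nonempty_of_effective G fun v => by simpa using hsmall v
  obtain ⟨P, hP⟩ := not_forall.1 hsmall
  refine linSys_nonempty_of_le G (fun v => ?_) (linSys_one_sub_two_unit_nonempty G (hG P))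
  by_cases hv : v = P
  · subst hv
    have : E v ≤ degDiv E := single_le_sum (fun w _ => hE w) (mem_univ v)
    simp only [Pi.smul_apply, unit, ↓reduceIte, nsmul_eq_mul, Nat.cast_ofNat, mul_one]
    omega
  · have : E P + E v ≤ degDiv E := by
      rw [degDiv, ← sum_pair (Ne.symm hv)]
      exact sum_le_sum_of_subset_of_nonneg (subset_univ _) fun w _ _ => hE w
    simp only [Pi.smul_apply, unit, if_neg hv, smul_zero]
    omega

end

instance : DecidableRel g4.Adj := fun v w =>
  decidable_of_iff _ (SimpleGraph.fromRel_adj _ v w).symm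

theorem g4_exists_adj : ∀ P, ∃ Q, g4.Adj P Q := by decide

theorem lap_g4 (f : Fin 4 → ℤ) : lap g4 f =
    ![3 * f 0 - f 1 - f 2 - f 3, 2 * f 1 - f 0 - f 2, 3 * f 2 - f 0 - f 1 - f 3,
      2 * f 3 - f 0 - f 2] := by
  funext P
  fin_cases P <;>
  · simp [lap, Fin.sum_univ_four, g4, SimpleGraph.fromRel_adj]
    ring

/-- The weights `(0, 1, 2, 5)` modulo `8` kill every principal divisor (`Jac(g4) ≅ ℤ/8`), and
`P₁ - P₂ + P₄` has weight `4`, while no single vertex does. -/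
theorem linSys_g4_eq_empty : linSys g4 ((fun _ => 1) - ![0, 2, 1, 0]) = ∅ := by
  refine Set.eq_empty_of_forall_notMem fun F ⟨hF, f, hf⟩ => ?_
  rw [lap_g4] at hf
  have h0 := congrFun hf 0
  have h1 := congrFun hf 1
  have h2 := congrFun hf 2
  have h3 := congrFun hf 3
  simp only [Pi.sub_apply, Matrix.cons_val_zero, Matrix.cons_val_one, Matrix.cons_val_two,
    Matrix.cons_val_three, Matrix.head_cons, Matrix.tail_cons] at h0 h1 h2 h3
  have hweight : F 1 + 2 * F 2 + 5 * F 3 = 4 + 8 * (f 3 - f 0) := by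
    linear_combination h1 + 2 * h2 + 5 * h3
  have hdeg : F 0 + F 1 + F 2 + F 3 = 1 := by linear_combination h0 + h1 + h2 + h3
  have := hF 0; have := hF 1; have := hF 2; have := hF 3
  obtain h | h : F 3 = 0 ∨ F 3 = 1 := by omega
  all_goals omega

theorem g4_rankEq_two : RankEq g4 (fun _ => 1) 2 := by
  refine ⟨by norm_num, fun E hE hdeg => linSys_one_sub_nonempty g4 g4_exists_adj hE hdeg,
    ![0, 2, 1, 0], fun v => by fin_cases v <;> decide, by simp [degDiv, Fin.sum_univ_four],
    linSys_g4_eq_empty⟩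

theorem g4_perm_mul_self : ∀ p : Equiv.Perm (Fin 4),
    (∀ a b, g4.Adj (p a) (p b) ↔ g4.Adj a b) → p * p = 1 := by
  decide

theorem g4_aut_mul_self (σ : g4 ≃g g4) : σ * σ = 1 := by
  have h := g4_perm_mul_self σ.toEquiv fun _ _ => σ.map_adj_iff
  ext v
  exact congr($h v)

theorem g4_subgroup_natCard_ne_three (H : Subgroup (g4 ≃g g4)) : Nat.card H ≠ 3 := by
  intro h3
  have : Finite H := Nat.finite_of_card_ne_zero (by omega)
  exact not_dvd_natCard_of_forall_mul_self_eq_one (fun g : H => Subtype.ext (g4_aut_mul_self g))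
    (p := 3) (by norm_num) h3.symm.dvd

theorem g4_not_isGaloisPoint (P : Fin 4) : ¬ IsGaloisPoint g4 (fun _ => 1) P := by
  rintro ⟨-, -, H, hcard, -⟩
  have hdeg : degDiv (fun _ => (1 : ℤ) : Fin 4 → ℤ) = 4 := by simp [degDiv]
  rw [hdeg] at hcard
  exact g4_subgroup_natCard_ne_three H (by omega)

end GraphDiv

open GraphDiv in
/-- For the 4-cycle with one chord and `D = P₁ + P₂ + P₃ + P₄`, one has
`r(D) = 2` but no vertex is a Galois point with respect to `|D|`. -/
theorem stmt17 :
    RankEq g4 (fun _ => 1) 2 ∧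
    ∀ P : Fin 4, ¬ IsGaloisPoint g4 (fun _ => 1) P :=
  ⟨g4_rankEq_two, g4_not_isGaloisPoint⟩
end
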